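/- For n ≥ 1, let D_n be the determinant of the n×n tridiagonal integer matrix with all diagonal entries equal to 6 and off-diagonal entries −1 on the sub- and super-diagonal. Then, as real numbers, D_n = ((3+2√2)^{n+1} − (3−2√2)^{n+1}) / (4√2). (D_n is the number of spanning trees of the hexagonal chain PL_n^6.) -/

import Mathlib

/-!
Expanding along the last row gives the continuant recurrence
`D (n + 2) = 6 * D (n + 1) - D n` with `D 0 = 1`, `D 1 = 6`. The roots `α, β = 3 ± 2√2` of
`t² - 6t + 1` satisfy `α + β = 6`, `αβ = 1`, `α - β = 4√2`, and
`(α - β) D n = α ^ (n + 1) - β ^ (n + 1)` follows by two-step induction.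
-/

/-- `tridiag x n` is the `n × n` tridiagonal matrix `T(x_1, …, x_n)` whose `(i,i)`-entry
is `x (i+1)` (so the diagonal reads `x 1, …, x n`), whose `(i,j)`-entry is `-1` when
`|i - j| = 1`, and whose other entries are `0`; equivalently `diag(x) - A(P_n)` for the
path graph `P_n`. -/
def tridiag {R : Type*} [CommRing R] (x : ℕ → R) (n : ℕ) :
    Matrix (Fin n) (Fin n) R :=
  Matrix.of fun i j =>
    if (i : ℕ) = j then x ((i : ℕ) + 1)
    else if (i : ℕ) + 1 = j ∨ (j : ℕ) + 1 = i then -1 else 0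

namespace Matrix

variable {R : Type*} [CommRing R]

theorem det_succ_eq_mul_det_of_col_last_eq_zero {n : ℕ}
    (A : Matrix (Fin (n + 1)) (Fin (n + 1)) R) (h : ∀ i : Fin n, A i.castSucc (Fin.last n) = 0) :
    A.det = A (Fin.last n) (Fin.last n) * (A.submatrix Fin.castSucc Fin.castSucc).det := by
  rw [det_succ_column A (Fin.last n), Fin.sum_univ_castSucc]
  simp [h, ← two_mul]

end Matrix

open Matrix

section Tridiag

variable {R : Type*} [CommRing R] (x : ℕ → R)

theorem tridiag_submatrix_castSucc (n : ℕ) :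
    (tridiag x (n + 1)).submatrix Fin.castSucc Fin.castSucc = tridiag x n := by
  ext i j
  simp [tridiag]

theorem tridiag_apply_self {n : ℕ} (i : Fin n) : tridiag x n i i = x (i + 1) := by
  simp [tridiag]

theorem tridiag_apply_of_add_one_eq {n : ℕ} {i j : Fin n}
    (h : (i : ℕ) + 1 = j ∨ (j : ℕ) + 1 = i) : tridiag x n i j = -1 := by
  simp only [tridiag, of_apply]
  rw [if_neg (by omega), if_pos h]

theorem tridiag_apply_of_add_two_le {n : ℕ} {i j : Fin n}
    (h : (i : ℕ) + 2 ≤ j ∨ (j : ℕ) + 2 ≤ i) : tridiag x n i j = 0 := by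
  simp only [tridiag, of_apply]
  rw [if_neg (by omega), if_neg (by omega)]

theorem det_tridiag_zero : (tridiag x 0).det = 1 :=
  det_isEmpty

theorem det_tridiag_one : (tridiag x 1).det = x 1 := by
  simp [tridiag_apply_self]

theorem det_tridiag_succ_succ (n : ℕ) :
    (tridiag x (n + 2)).det = x (n + 2) * (tridiag x (n + 1)).det - (tridiag x n).det := by
  have hminor : ((tridiag x (n + 2)).submatrix Fin.castSucc
      (Fin.last n).castSucc.succAbove).det = -(tridiag x n).det := by
    have hcols : (Fin.last n).castSucc.succAbove ∘ Fin.castSucc = Fin.castSucc ∘ Fin.castSucc :=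
      funext fun i => Fin.succAbove_castSucc_of_lt _ _ (Fin.castSucc_lt_last i)
    -- deleting the last row and the penultimate column leaves `-1` as the only nonzero entry
    -- of the last column
    rw [det_succ_eq_mul_det_of_col_last_eq_zero]
    · simp only [submatrix_apply, Fin.succAbove_castSucc_self, Fin.succ_last, submatrix_submatrix]
      rw [hcols, ← submatrix_submatrix, tridiag_submatrix_castSucc, tridiag_submatrix_castSucc,
        tridiag_apply_of_add_one_eq x (by simp), neg_one_mul]
    · intro i
      simp only [submatrix_apply, Fin.succAbove_castSucc_self, Fin.succ_last]
      exact tridiag_apply_of_add_two_le x (by simp)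
  rw [det_succ_row _ (Fin.last (n + 1)), Fin.sum_univ_castSucc, Fin.sum_univ_castSucc]
  simp [tridiag_apply_of_add_two_le, hminor, tridiag_submatrix_castSucc, tridiag_apply_self,
    tridiag_apply_of_add_one_eq, sub_eq_neg_add]

end Tridiag

theorem sub_mul_eq_pow_succ_sub_pow_succ {K : Type*} [CommRing K] {α β : K} {d : ℕ → K}
    (h0 : d 0 = 1) (h1 : d 1 = α + β) (hrec : ∀ n, d (n + 2) = (α + β) * d (n + 1) - α * β * d n)
    (n : ℕ) : (α - β) * d n = α ^ (n + 1) - β ^ (n + 1) := by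
  induction n using Nat.twoStepInduction with
  | zero => simp [h0]
  | one => rw [h1]; ring
  | more n ih0 ih1 => rw [hrec]; linear_combination (α + β) * ih1 - α * β * ih0

theorem tridiag_const_six_det_general (n : ℕ) :
    ((tridiag (fun _ => (6 : ℤ)) n).det : ℝ) =
      ((3 + 2 * Real.sqrt 2) ^ (n + 1) - (3 - 2 * Real.sqrt 2) ^ (n + 1)) / (4 * Real.sqrt 2) := by
  set D : ℕ → ℝ := fun n => ((tridiag (fun _ => (6 : ℤ)) n).det : ℝ) with hD
  have hsq : Real.sqrt 2 * Real.sqrt 2 = 2 := Real.mul_self_sqrt zero_le_two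
  have hsum : (3 + 2 * Real.sqrt 2) + (3 - 2 * Real.sqrt 2) = 6 := by ring
  have hprod : (3 + 2 * Real.sqrt 2) * (3 - 2 * Real.sqrt 2) = 1 := by
    linear_combination -4 * hsq
  have h0 : D 0 = 1 := by simp only [hD, det_tridiag_zero, Int.cast_one]
  have h1 : D 1 = (3 + 2 * Real.sqrt 2) + (3 - 2 * Real.sqrt 2) := by
    simp only [hD, det_tridiag_one, hsum]; norm_num
  have hrec : ∀ n, D (n + 2) = ((3 + 2 * Real.sqrt 2) + (3 - 2 * Real.sqrt 2)) * D (n + 1) -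
      (3 + 2 * Real.sqrt 2) * (3 - 2 * Real.sqrt 2) * D n := by
    intro n
    simp [hD, det_tridiag_succ_succ, hsum, hprod]
  rw [eq_div_iff (by positivity), ← sub_mul_eq_pow_succ_sub_pow_succ h0 h1 hrec n]
  ring

/-- For `n ≥ 1`, the determinant `D_n` of the `n × n` tridiagonal integer matrix with
constant diagonal `6` and off-diagonal entries `-1` satisfies, as real numbers,
`D_n = ((3+2√2)^{n+1} - (3-2√2)^{n+1}) / (4√2)`. (`D_n` is the number of spanning trees
of the hexagonal chain `PL_n^6`.) -/
theorem tridiag_const_six_det (n : ℕ) (hn : 1 ≤ n) :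
    ((tridiag (fun _ => (6 : ℤ)) n).det : ℝ) =
      ((3 + 2 * Real.sqrt 2) ^ (n + 1) - (3 - 2 * Real.sqrt 2) ^ (n + 1)) / (4 * Real.sqrt 2) :=
  tridiag_const_six_det_general n
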